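/- arXiv:2409.18021 — 2 statements merged into one kernel-verified Lean document; each statement's English description precedes it below -/
import Mathlib

section
/- Let p be a prime, let F ∈ ℤ_p⟦T⟧ be nonzero with μ(F) = 0, and let n ≥ 0 satisfy λ(F) < p^n. Suppose F = ω_n·Q + R with Q ∈ ℤ_p⟦T⟧ and R ∈ ℤ_p[T] a nonzero polynomial of degree < p^n. Then λ(R) = λ(F). -/
open PowerSeries Polynomial Classical in
/-- `p`-adic valuation on `ℤ_[p]`, with value `⊤` at `0`. -/
noncomputable def vp (p : ℕ) [Fact p.Prime] (x : ℤ_[p]) : ℕ∞ :=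
  if x = 0 then ⊤ else x.valuation

/-- Iwasawa `μ`-invariant: the minimum of the `p`-adic valuations of the coefficients. -/
noncomputable def mu (p : ℕ) [Fact p.Prime] (F : PowerSeries ℤ_[p]) : ℕ∞ :=
  ⨅ i : ℕ, vp p (PowerSeries.coeff i F)

/-- Iwasawa `λ`-invariant: the least index whose coefficient valuation attains `μ`. -/
noncomputable def lam (p : ℕ) [Fact p.Prime] (F : PowerSeries ℤ_[p]) : ℕ :=
  sInf { i : ℕ | vp p (PowerSeries.coeff i F) = mu p F }

/-!
Modulo `p`, the coefficients of `ω_n = (1 + T)^{p^n} - 1` below degree `p^n` vanish, since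
`p ∣ (p^n choose j)` for `0 < j < p^n`. Hence `F ≡ R` modulo `(p, T^{p^n})`. When `μ(F) = 0`,
`λ(F)` is the first index whose coefficient is a unit, and as `λ(F) < p^n` this property only
sees the coefficients of `F` modulo `(p, T^{p^n})`, so it is shared by `R`.
-/

open PowerSeries

section Invariants

variable {p : ℕ} [Fact p.Prime]

theorem vp_eq_zero_iff (x : ℤ_[p]) : vp p x = 0 ↔ ¬ (p : ℤ_[p]) ∣ x := by
  unfold vp
  split_ifs with hx
  · simp [hx]
  · have h := PadicInt.mem_span_pow_iff_le_valuation x hx 1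
    rw [pow_one, Ideal.mem_span_singleton] at h
    rw [h]
    norm_cast
    omega

theorem mu_eq_zero_iff {F : PowerSeries ℤ_[p]} :
    mu p F = 0 ↔ ∃ i, ¬ (p : ℤ_[p]) ∣ coeff i F := by
  simp only [mu, ENat.iInf_eq_zero, vp_eq_zero_iff]

theorem lam_eq_iff_of_mu_eq_zero {F : PowerSeries ℤ_[p]} (hmu : mu p F = 0) {k : ℕ} :
    lam p F = k ↔ ¬ (p : ℤ_[p]) ∣ coeff k F ∧ ∀ i < k, (p : ℤ_[p]) ∣ coeff i F := by
  have hset : {i | vp p (coeff i F) = mu p F} = {i | ¬ (p : ℤ_[p]) ∣ coeff i F} := by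
    simp only [hmu, vp_eq_zero_iff]
  have hne : {i | ¬ (p : ℤ_[p]) ∣ coeff i F}.Nonempty := mu_eq_zero_iff.1 hmu
  rw [lam, hset]
  constructor
  · rintro rfl
    exact ⟨Nat.sInf_mem hne, fun i hi => not_not.1 (Nat.notMem_of_lt_sInf hi)⟩
  · rintro ⟨hk, hlt⟩
    exact IsLeast.csInf_eq ⟨hk, fun i hi => not_lt.1 fun hik => hi (hlt i hik)⟩

end Invariants

theorem Polynomial.prime_dvd_coeff_one_add_X_pow_prime_pow_sub_one {R : Type*} [CommRing R]
    {p : ℕ} (hp : p.Prime) (n : ℕ) {j : ℕ} (hj : j < p ^ n) :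
    (p : R) ∣ ((1 + Polynomial.X) ^ p ^ n - 1 : Polynomial R).coeff j := by
  rw [coeff_sub, coeff_one_add_X_pow, coeff_one]
  rcases eq_or_ne j 0 with rfl | hj0
  · simp
  · rw [if_neg hj0, sub_zero]
    exact Nat.cast_dvd_cast (hp.dvd_choose_pow hj0 hj.ne)

theorem PowerSeries.dvd_coeff_mul_of_dvd_coeff_lt {R : Type*} [CommSemiring R] {a : R} {N : ℕ}
    {A : PowerSeries R} (hA : ∀ j < N, a ∣ coeff j A) (B : PowerSeries R) {i : ℕ} (hi : i < N) :
    a ∣ coeff i (A * B) := by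
  rw [coeff_mul]
  refine Finset.dvd_sum fun x hx => (hA x.1 ?_).mul_right _
  have := Finset.HasAntidiagonal.mem_antidiagonal.1 hx
  omega

theorem stmt_2_general (p : ℕ) [Fact p.Prime] (F : PowerSeries ℤ_[p])
    (hmu : mu p F = 0) (n : ℕ) (hlam : lam p F < p ^ n)
    (Q : PowerSeries ℤ_[p]) (R : Polynomial ℤ_[p])
    (hFQR : F = (((1 + Polynomial.X) ^ p ^ n - 1 : Polynomial ℤ_[p]) : PowerSeries ℤ_[p]) * Q
      + (R : PowerSeries ℤ_[p])) :
    lam p (R : PowerSeries ℤ_[p]) = lam p F := by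
  have hcongr : ∀ i < p ^ n,
      ((p : ℤ_[p]) ∣ coeff i F ↔ (p : ℤ_[p]) ∣ coeff i (R : PowerSeries ℤ_[p])) := by
    intro i hi
    have hω : ∀ j < p ^ n, (p : ℤ_[p]) ∣
        coeff j (((1 + Polynomial.X) ^ p ^ n - 1 : Polynomial ℤ_[p]) : PowerSeries ℤ_[p]) :=
      fun j hj => by
        simpa only [Polynomial.coeff_coe] using
          Polynomial.prime_dvd_coeff_one_add_X_pow_prime_pow_sub_one Fact.out n hj
    rw [hFQR, map_add]
    exact dvd_add_right (dvd_coeff_mul_of_dvd_coeff_lt hω Q hi)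
  obtain ⟨hunit, hbelow⟩ := (lam_eq_iff_of_mu_eq_zero hmu).1 rfl
  have hunitR := mt (hcongr _ hlam).2 hunit
  refine (lam_eq_iff_of_mu_eq_zero (mu_eq_zero_iff.2 ⟨_, hunitR⟩)).2 ⟨hunitR, fun i hi => ?_⟩
  exact (hcongr i (hi.trans hlam)).1 (hbelow i hi)

theorem stmt_2 (p : ℕ) [Fact p.Prime] (F : PowerSeries ℤ_[p]) (hF : F ≠ 0)
    (hmu : mu p F = 0) (n : ℕ) (hlam : lam p F < p ^ n)
    (Q : PowerSeries ℤ_[p]) (R : Polynomial ℤ_[p]) (hR : R ≠ 0)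
    (hdeg : R.degree < (p ^ n : ℕ))
    (hFQR : F = (((1 + Polynomial.X) ^ p ^ n - 1 : Polynomial ℤ_[p]) : PowerSeries ℤ_[p]) * Q
      + (R : PowerSeries ℤ_[p])) :
    lam p (R : PowerSeries ℤ_[p]) = lam p F :=
  stmt_2_general p F hmu n hlam Q R hFQR
end

section
/- Let p be a prime and n ≥ 0 an integer. Let L ∈ ℤ_p⟦T⟧ be nonzero, let w ∈ ℤ_p[T] be a nonzero polynomial with μ(w) = 0, and let θ ∈ ℤ_p[T] be a polynomial of degree < p^n. Suppose that ω_n divides θ − w·L in ℤ_p⟦T⟧ and that λ(w) + λ(L) < p^n. Then θ ≠ 0, μ(θ) = μ(L), and λ(θ) = λ(w) + λ(L). -/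
/-! Write `θ = w L + ω_n H`. Since `μ` and `λ` are additive and `λ(ω_n) = p^n`, the degree bound
on `θ` kills its coefficient at `λ(ω_n H) ≥ p^n`, which forces `μ(H) = μ(ω_n H) ≥ μ(w L) = μ(L)`.
As `ω_n ≡ T^{p^n} mod p`, the coefficients of `ω_n H` below `p^n` are then divisible by
`p^{μ(L)+1}`, so adding `ω_n H` to `w L` changes neither `μ` nor `λ(w L) = λ(w) + λ(L) < p^n`. -/

open PowerSeries

section Valuation

variable {p : ℕ} [Fact p.Prime] {x y : ℤ_[p]}

lemma vp_eq_emultiplicity (x : ℤ_[p]) : vp p x = emultiplicity (p : ℤ_[p]) x := by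
  refine ENat.eq_of_forall_natCast_le_iff fun k => ?_
  rw [← pow_dvd_iff_le_emultiplicity]
  by_cases hx : x = 0
  · simp [vp, hx]
  · rw [vp, if_neg hx, Nat.cast_le, ← PadicInt.mem_span_pow_iff_le_valuation x hx,
      Ideal.mem_span_singleton]

@[simp]
lemma vp_zero : vp p 0 = ⊤ := if_pos rfl

lemma vp_one : vp p 1 = 0 := by
  rw [vp_eq_emultiplicity, emultiplicity_of_one_right PadicInt.prime_p.not_isUnit]

lemma natCast_le_vp_iff {k : ℕ} : (k : ℕ∞) ≤ vp p x ↔ (p : ℤ_[p]) ^ k ∣ x := by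
  rw [vp_eq_emultiplicity, pow_dvd_iff_le_emultiplicity]

lemma natCast_lt_vp_iff {k : ℕ} : (k : ℕ∞) < vp p x ↔ (p : ℤ_[p]) ^ (k + 1) ∣ x := by
  rw [← ENat.add_one_le_iff (ENat.natCast_ne_top k), ← Nat.cast_add_one, natCast_le_vp_iff]

lemma vp_pos_iff : 0 < vp p x ↔ (p : ℤ_[p]) ∣ x := by
  simpa using natCast_lt_vp_iff (x := x) (k := 0)

lemma vp_mul (x y : ℤ_[p]) : vp p (x * y) = vp p x + vp p y := by
  simp only [vp_eq_emultiplicity]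
  exact emultiplicity_mul PadicInt.prime_p

lemma vp_neg (x : ℤ_[p]) : vp p (-x) = vp p x := by
  simp only [vp_eq_emultiplicity, emultiplicity_neg]

lemma min_le_vp_add : min (vp p x) (vp p y) ≤ vp p (x + y) := by
  simp only [vp_eq_emultiplicity]
  exact min_le_emultiplicity_add

lemma vp_add_of_lt (h : vp p x < vp p y) : vp p (x + y) = vp p x := by
  simp only [vp_eq_emultiplicity] at h ⊢
  rw [add_comm, emultiplicity_add_of_gt h]

lemma le_vp_sum {ι : Type*} {s : Finset ι} {f : ι → ℤ_[p]} {k : ℕ∞}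
    (h : ∀ i ∈ s, k ≤ vp p (f i)) : k ≤ vp p (∑ i ∈ s, f i) :=
  Finset.sum_induction f (fun y => k ≤ vp p y)
    (fun _ _ ha hb => (le_min ha hb).trans min_le_vp_add) (by simp) h

end Valuation

lemma dvd_coeff_mul_of_lt {R : Type*} [CommSemiring R] {a b : R} {F G : R⟦X⟧} {N i : ℕ}
    (hF : ∀ j < N, a ∣ coeff j F) (hG : ∀ j, b ∣ coeff j G) (hi : i < N) :
    a * b ∣ coeff i (F * G) := by
  rw [coeff_mul]
  exact Finset.dvd_sum fun x hx =>
    mul_dvd_mul (hF _ ((Finset.HasAntidiagonal.antidiagonal.fst_le hx).trans_lt hi)) (hG _)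

section Invariants

variable {p : ℕ} [Fact p.Prime] {F G : PowerSeries ℤ_[p]}

lemma mu_le_vp_coeff (F : PowerSeries ℤ_[p]) (i : ℕ) : mu p F ≤ vp p (coeff i F) :=
  iInf_le _ i

lemma natCast_le_mu_iff {k : ℕ} : (k : ℕ∞) ≤ mu p F ↔ ∀ i, (p : ℤ_[p]) ^ k ∣ coeff i F := by
  simp only [mu, le_iInf_iff, natCast_le_vp_iff]

lemma mu_eq_top_iff : mu p F = ⊤ ↔ F = 0 := by
  simp only [mu, iInf_eq_top, vp, ite_eq_left_iff, ENat.natCast_ne_top, imp_false, not_not]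
  exact ⟨fun h => ext fun i => by simpa using h i, fun h i => by simp [h]⟩

@[simp]
lemma mu_zero : mu p (0 : PowerSeries ℤ_[p]) = ⊤ :=
  mu_eq_top_iff.2 rfl

lemma vp_coeff_lam (F : PowerSeries ℤ_[p]) : vp p (coeff (lam p F) F) = mu p F :=
  Nat.sInf_mem (ciInf_mem fun i => vp p (coeff i F))

lemma mu_lt_vp_coeff_of_lt_lam {i : ℕ} (h : i < lam p F) : mu p F < vp p (coeff i F) :=
  (mu_le_vp_coeff F i).lt_of_ne (Ne.symm (Nat.notMem_of_lt_sInf h))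

lemma mu_eq_and_lam_eq_of_vp_coeff {m : ℕ∞} {l : ℕ} (hle : ∀ i, m ≤ vp p (coeff i F))
    (heq : vp p (coeff l F) = m) (hlt : ∀ i < l, m < vp p (coeff i F)) :
    mu p F = m ∧ lam p F = l := by
  have hmu : mu p F = m := le_antisymm (heq ▸ mu_le_vp_coeff F l) (le_iInf hle)
  refine ⟨hmu, le_antisymm (Nat.sInf_le (heq.trans hmu.symm)) ?_⟩
  by_contra! h
  exact (hlt _ h).ne' ((vp_coeff_lam F).trans hmu)

lemma mu_mul_and_lam_mul (hF : F ≠ 0) (hG : G ≠ 0) :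
    mu p (F * G) = mu p F + mu p G ∧ lam p (F * G) = lam p F + lam p G := by
  have hGtop : mu p G ≠ ⊤ := mt mu_eq_top_iff.1 hG
  have hle : ∀ x : ℕ × ℕ, mu p F + mu p G ≤ vp p (coeff x.1 F * coeff x.2 G) := fun x => by
    rw [vp_mul]
    exact add_le_add (mu_le_vp_coeff F _) (mu_le_vp_coeff G _)
  have hlt : ∀ x : ℕ × ℕ, x.1 < lam p F ∨ x.2 < lam p G →
      mu p F + mu p G < vp p (coeff x.1 F * coeff x.2 G) := by
    rintro x (h | h) <;> rw [vp_mul]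
    · exact ENat.add_lt_add_of_lt_of_le hGtop (mu_lt_vp_coeff_of_lt_lam h) (mu_le_vp_coeff G _)
    · exact ENat.add_lt_add_of_le_of_lt (mt mu_eq_top_iff.1 hF) (mu_le_vp_coeff F _)
        (mu_lt_vp_coeff_of_lt_lam h)
  have hsum_lt : ∀ {s : Finset (ℕ × ℕ)}, (∀ x ∈ s, x.1 < lam p F ∨ x.2 < lam p G) →
      mu p F + mu p G < vp p (∑ x ∈ s, coeff x.1 F * coeff x.2 G) := by
    intro s hs
    have htop : mu p F + mu p G ≠ ⊤ := by simpa [mu_eq_top_iff, hF] using hGtop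
    rw [← ENat.add_one_le_iff htop]
    exact le_vp_sum fun x hx => (ENat.add_one_le_iff htop).2 (hlt x (hs x hx))
  refine mu_eq_and_lam_eq_of_vp_coeff (fun i => ?_) ?_ fun i hi => ?_
  · rw [coeff_mul]
    exact le_vp_sum fun x _ => hle x
  · have hmem : (lam p F, lam p G) ∈ Finset.HasAntidiagonal.antidiagonal (lam p F + lam p G) := by
      simp
    rw [coeff_mul, ← Finset.add_sum_erase _ _ hmem, vp_add_of_lt] <;>
      rw [vp_mul, vp_coeff_lam, vp_coeff_lam]
    refine hsum_lt fun x hx => ?_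
    rw [Finset.mem_erase, Finset.HasAntidiagonal.mem_antidiagonal] at hx
    by_contra! h
    exact hx.1 (Prod.ext (by omega) (by omega))
  · rw [coeff_mul]
    refine hsum_lt fun x hx => ?_
    rw [Finset.HasAntidiagonal.mem_antidiagonal] at hx
    omega

lemma mu_mul (F G : PowerSeries ℤ_[p]) : mu p (F * G) = mu p F + mu p G := by
  rcases eq_or_ne F 0 with rfl | hF
  · simp
  rcases eq_or_ne G 0 with rfl | hG
  · simp
  exact (mu_mul_and_lam_mul hF hG).1

lemma mu_add_eq_and_lam_add_eq {N : ℕ} (hlam : lam p F < N) (hmu : mu p F ≤ mu p G)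
    (hcoeff : ∀ i < N, mu p F < vp p (coeff i G)) :
    mu p (F + G) = mu p F ∧ lam p (F + G) = lam p F := by
  refine mu_eq_and_lam_eq_of_vp_coeff (fun i => ?_) ?_ fun i hi => ?_ <;> rw [map_add]
  · exact (le_min (mu_le_vp_coeff F i) (hmu.trans (mu_le_vp_coeff G i))).trans min_le_vp_add
  · rw [vp_add_of_lt] <;> rw [vp_coeff_lam]
    exact hcoeff _ hlam
  · exact (lt_min (mu_lt_vp_coeff_of_lt_lam hi) (hcoeff i (hi.trans hlam))).trans_le
      min_le_vp_add

variable {Ω H : PowerSeries ℤ_[p]}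

lemma mu_le_mu_mul_of_coeff_eq_zero (hΩ : Ω ≠ 0)
    (hvanish : ∀ i, lam p Ω ≤ i → coeff i (F + Ω * H) = 0) : mu p F ≤ mu p (Ω * H) := by
  rcases eq_or_ne H 0 with rfl | hH
  · simp
  have hlam := (mu_mul_and_lam_mul hΩ hH).2
  have hcoeff := hvanish (lam p (Ω * H)) (hlam ▸ Nat.le_add_right _ _)
  rw [map_add, add_eq_zero_iff_eq_neg] at hcoeff
  calc mu p F ≤ vp p (coeff (lam p (Ω * H)) F) := mu_le_vp_coeff F _
    _ = mu p (Ω * H) := by rw [hcoeff, vp_neg, vp_coeff_lam]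

lemma natCast_lt_vp_coeff_mul {k i : ℕ} (hΩ : mu p Ω = 0) (hk : (k : ℕ∞) ≤ mu p (Ω * H))
    (hi : i < lam p Ω) : (k : ℕ∞) < vp p (coeff i (Ω * H)) := by
  rw [mu_mul, hΩ, zero_add, natCast_le_mu_iff] at hk
  rw [natCast_lt_vp_iff, pow_succ']
  refine dvd_coeff_mul_of_lt (fun j hj => ?_) hk hi
  rw [← vp_pos_iff, ← hΩ]
  exact mu_lt_vp_coeff_of_lt_lam hj

end Invariants

open Polynomial in
lemma mu_omega_eq_zero_and_lam_omega_eq (p n : ℕ) [Fact p.Prime] :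
    mu p (((1 + Polynomial.X) ^ p ^ n - 1 : ℤ_[p][X]) : PowerSeries ℤ_[p]) = 0
      ∧ lam p (((1 + Polynomial.X) ^ p ^ n - 1 : ℤ_[p][X]) : PowerSeries ℤ_[p]) = p ^ n := by
  have hp : p.Prime := Fact.out
  have hcoeff (i : ℕ) :
      PowerSeries.coeff i (((1 + Polynomial.X) ^ p ^ n - 1 : ℤ_[p][X]) : PowerSeries ℤ_[p])
      = ((p ^ n).choose i : ℤ_[p]) - if i = 0 then 1 else 0 := by
    rw [Polynomial.coeff_coe, coeff_sub, coeff_one_add_X_pow, Polynomial.coeff_one, eq_comm]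
  refine mu_eq_and_lam_eq_of_vp_coeff (fun _ => zero_le) ?_ fun i hi => ?_ <;> rw [hcoeff]
  · simp [hp.ne_zero, vp_one]
  · rcases eq_or_ne i 0 with rfl | h0
    · simp
    rw [if_neg h0, sub_zero, vp_pos_iff]
    exact Nat.cast_dvd_cast (hp.dvd_choose_pow h0 hi.ne)

theorem stmt_10 (p : ℕ) [Fact p.Prime] (n : ℕ) (L : PowerSeries ℤ_[p]) (hL : L ≠ 0)
    (w : Polynomial ℤ_[p]) (hw : w ≠ 0) (hmuw : mu p (w : PowerSeries ℤ_[p]) = 0)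
    (θ : Polynomial ℤ_[p]) (hdeg : θ.degree < (p ^ n : ℕ))
    (hdvd : (((1 + Polynomial.X) ^ p ^ n - 1 : Polynomial ℤ_[p]) : PowerSeries ℤ_[p])
      ∣ ((θ : PowerSeries ℤ_[p]) - (w : PowerSeries ℤ_[p]) * L))
    (hlt : lam p (w : PowerSeries ℤ_[p]) + lam p L < p ^ n) :
    θ ≠ 0 ∧ mu p (θ : PowerSeries ℤ_[p]) = mu p L
      ∧ lam p (θ : PowerSeries ℤ_[p]) = lam p (w : PowerSeries ℤ_[p]) + lam p L := by
  obtain ⟨hΩmu, hΩlam⟩ := mu_omega_eq_zero_and_lam_omega_eq p n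
  set Ω : PowerSeries ℤ_[p] :=
    (((1 + Polynomial.X) ^ p ^ n - 1 : Polynomial ℤ_[p]) : PowerSeries ℤ_[p])
  obtain ⟨H, hH⟩ := hdvd
  have hθ : (θ : PowerSeries ℤ_[p]) = w * L + Ω * H := by rw [← hH, add_sub_cancel]
  obtain ⟨m, hm⟩ : ∃ m : ℕ, (m : ℕ∞) = mu p L := ENat.ne_top_iff_exists.1 (mt mu_eq_top_iff.1 hL)
  have hmu_wL : mu p (w * L) = m := by rw [mu_mul, hmuw, zero_add, ← hm]
  have hlam_wL : lam p (w * L) = lam p w + lam p L :=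
    (mu_mul_and_lam_mul (mt Polynomial.coe_eq_zero_iff.1 hw) hL).2
  have hmu_ΩH : mu p (w * L) ≤ mu p (Ω * H) := by
    refine mu_le_mu_mul_of_coeff_eq_zero (fun h => by simp [h] at hΩmu) fun i hi => ?_
    rw [← hθ, Polynomial.coeff_coe]
    exact Polynomial.coeff_eq_zero_of_degree_lt (hdeg.trans_le (by rw [← hΩlam]; exact_mod_cast hi))
  obtain ⟨hmuθ, hlamθ⟩ := mu_add_eq_and_lam_add_eq (hlam_wL ▸ hlt) hmu_ΩH fun i hi =>
    hmu_wL ▸ natCast_lt_vp_coeff_mul hΩmu (hmu_wL ▸ hmu_ΩH) (hΩlam ▸ hi)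
  rw [← hθ, hmu_wL] at hmuθ
  rw [← hθ, hlam_wL] at hlamθ
  refine ⟨fun h0 => ?_, hmuθ.trans hm, hlamθ⟩
  simp [h0] at hmuθ
end
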